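/- arXiv:1302.5673 — 3 statements merged into one kernel-verified Lean document; each statement's English description precedes it below -/
import Mathlib

section
/- In any semi-magic square (a 3×3 array containing 0 through 8 exactly once with all rows and columns summing to 12), either the three row-sets are {0,4,8},{1,5,6},{2,3,7} and the three column-sets are {0,5,7},{2,4,6},{1,3,8}, or vice versa. -/
/-!
Every row (and every column) of a semi-magic square is a 3-subset of `{0, …, 8}` with sum 12.
There are eight such triples, and exactly two ways to partition `{0, …, 8}` into three of them.
Rows and columns cannot induce the same partition, because a row and a column meet in a single
cell while two equal blocks would share three entries.
-/

open Finset Function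

section RowSets

variable {α β γ : Type*} [DecidableEq γ]

def rowSet [Fintype β] (g : α × β → γ) (i : α) : Finset γ := univ.image fun j => g (i, j)

def colSet [Fintype α] (g : α × β → γ) (j : β) : Finset γ := univ.image fun i => g (i, j)

variable {g : α × β → γ}

theorem rowSet_comp_swap [Fintype α] : rowSet (g ∘ Prod.swap) = colSet g := rfl

theorem card_rowSet [Fintype β] (hg : Injective g) (i : α) : #(rowSet g i) = Fintype.card β :=
  card_image_of_injective _ (hg.comp (Prod.mk_right_injective i))

theorem sum_rowSet [Fintype β] [AddCommMonoid γ] (hg : Injective g) (i : α) :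
    ∑ x ∈ rowSet g i, x = ∑ j, g (i, j) :=
  sum_image fun _ _ _ _ h => Prod.mk_right_injective i (hg h)

theorem rowSet_subset_image_univ [Fintype α] [Fintype β] (i : α) :
    rowSet g i ⊆ univ.image g :=
  image_subset_iff.mpr fun _ _ => mem_image_of_mem g (mem_univ _)

theorem biUnion_rowSet [Fintype α] [Fintype β] : univ.biUnion (rowSet g) = univ.image g := by
  ext; simp [rowSet]

theorem rowSet_inter_colSet [Fintype α] [Fintype β] (hg : Injective g) (i : α) (j : β) :
    rowSet g i ∩ colSet g j = {g (i, j)} := by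
  ext x
  simp only [rowSet, colSet, mem_inter, mem_image, mem_univ, true_and, mem_singleton]
  constructor
  · rintro ⟨⟨j', rfl⟩, i', h⟩
    obtain ⟨rfl, rfl⟩ := Prod.ext_iff.mp (hg h)
    rfl
  · rintro rfl
    exact ⟨⟨j, rfl⟩, i, rfl⟩

theorem image_rowSet_ne_image_colSet [Fintype α] [Fintype β] [Nonempty α]
    (hβ : 1 < Fintype.card β) (hg : Injective g) :
    univ.image (rowSet g) ≠ univ.image (colSet g) := by
  intro h
  obtain ⟨i⟩ := ‹Nonempty α›
  obtain ⟨j, -, hj⟩ := mem_image.mp (h ▸ mem_image_of_mem (rowSet g) (mem_univ i))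
  have := congrArg card (rowSet_inter_colSet hg i j)
  rw [hj, inter_self, card_rowSet hg, card_singleton] at this
  omega

end RowSets

def triplesSumTwelve : Finset (Finset ℕ) :=
  {{0, 4, 8}, {0, 5, 7}, {1, 3, 8}, {1, 4, 7}, {1, 5, 6}, {2, 3, 7}, {2, 4, 6}, {3, 4, 5}}

set_option maxRecDepth 10000 in
theorem mem_triplesSumTwelve {s : Finset ℕ} (hs : s ⊆ range 9) (hcard : #s = 3)
    (hsum : ∑ x ∈ s, x = 12) : s ∈ triplesSumTwelve := by
  have key : ∀ t ∈ (range 9).powerset, #t = 3 → ∑ x ∈ t, x = 12 →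
      t ∈ triplesSumTwelve := by
    decide
  exact key s (mem_powerset.mpr hs) hcard hsum

theorem eq_or_eq_of_union_eq_range {a b c : Finset ℕ} (ha : a ∈ triplesSumTwelve)
    (hb : b ∈ triplesSumTwelve) (hc : c ∈ triplesSumTwelve) (h : a ∪ b ∪ c = range 9) :
    ({a, b, c} : Finset (Finset ℕ)) = {{0, 4, 8}, {1, 5, 6}, {2, 3, 7}} ∨
      ({a, b, c} : Finset (Finset ℕ)) = {{0, 5, 7}, {2, 4, 6}, {1, 3, 8}} := by
  have key : ∀ a ∈ triplesSumTwelve, ∀ b ∈ triplesSumTwelve, ∀ c ∈ triplesSumTwelve,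
      a ∪ b ∪ c = range 9 →
      ({a, b, c} : Finset (Finset ℕ)) = {{0, 4, 8}, {1, 5, 6}, {2, 3, 7}} ∨
        ({a, b, c} : Finset (Finset ℕ)) = {{0, 5, 7}, {2, 4, 6}, {1, 3, 8}} := by
    decide
  exact key a ha b hb c hc h

theorem image_rowSet_eq_of_sum_eq_twelve {g : Fin 3 × Fin 3 → ℕ} (hg : Injective g)
    (himg : univ.image g = range 9) (hrow : ∀ i, ∑ j, g (i, j) = 12) :
    univ.image (rowSet g) = {{0, 4, 8}, {1, 5, 6}, {2, 3, 7}} ∨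
      univ.image (rowSet g) = {{0, 5, 7}, {2, 4, 6}, {1, 3, 8}} := by
  have hmem : ∀ i, rowSet g i ∈ triplesSumTwelve := fun i =>
    mem_triplesSumTwelve (himg ▸ rowSet_subset_image_univ i) (card_rowSet hg i)
      ((sum_rowSet hg i).trans (hrow i))
  have hunion : rowSet g 0 ∪ rowSet g 1 ∪ rowSet g 2 = range 9 := by
    rw [← himg, ← biUnion_rowSet]
    ext; simp [Fin.exists_fin_succ]
  have himage : univ.image (rowSet g) = {rowSet g 0, rowSet g 1, rowSet g 2} := by
    simp [Fin.univ_succ, image_insert]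
  rw [himage]
  exact eq_or_eq_of_union_eq_range (hmem 0) (hmem 1) (hmem 2) hunion

theorem semimagic_row_col_sets (f : Fin 3 × Fin 3 → Fin 9)
    (hbij : Function.Bijective f)
    (hrow : ∀ i : Fin 3, ∑ j : Fin 3, (f (i, j)).val = 12)
    (hcol : ∀ j : Fin 3, ∑ i : Fin 3, (f (i, j)).val = 12) :
    (Finset.image (fun i => Finset.image (fun j => (f (i, j)).val) Finset.univ) Finset.univ
        = {{0, 4, 8}, {1, 5, 6}, {2, 3, 7}} ∧
      Finset.image (fun j => Finset.image (fun i => (f (i, j)).val) Finset.univ) Finset.univ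
        = {{0, 5, 7}, {2, 4, 6}, {1, 3, 8}}) ∨
    (Finset.image (fun i => Finset.image (fun j => (f (i, j)).val) Finset.univ) Finset.univ
        = {{0, 5, 7}, {2, 4, 6}, {1, 3, 8}} ∧
      Finset.image (fun j => Finset.image (fun i => (f (i, j)).val) Finset.univ) Finset.univ
        = {{0, 4, 8}, {1, 5, 6}, {2, 3, 7}}) := by
  set g : Fin 3 × Fin 3 → ℕ := fun p => (f p).val
  have hg : Injective g := Fin.val_injective.comp hbij.injective
  have himg : univ.image g = range 9 := by
    change univ.image (Fin.val ∘ f) = _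
    rw [← image_image, image_univ_of_surjective hbij.surjective, image_fin_univ]
  have himg_swap : univ.image (g ∘ Prod.swap) = range 9 := by
    rw [← image_image, image_univ_of_surjective Prod.swap_surjective, himg]
  change univ.image (rowSet g) = _ ∧ univ.image (colSet g) = _ ∨
    univ.image (rowSet g) = _ ∧ univ.image (colSet g) = _
  have hne := image_rowSet_ne_image_colSet (by simp) hg
  have hcols := image_rowSet_eq_of_sum_eq_twelve (hg.comp Prod.swap_injective) himg_swap hcol
  rw [rowSet_comp_swap] at hcols
  rcases image_rowSet_eq_of_sum_eq_twelve hg himg hrow with hR | hR <;> rcases hcols with hC | hC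
  · exact absurd (hR.trans hC.symm) hne
  · exact Or.inl ⟨hR, hC⟩
  · exact Or.inr ⟨hR, hC⟩
  · exact absurd (hR.trans hC.symm) hne
end

section
/- In any 3×3 magic square modulo 9 (an array containing each of 0,...,8 once, with every row, column, and both diagonals summing to 0 mod 9), the center entry belongs to {0,3,6}, and exactly one of the two diagonals has entry set equal to {0,3,6}. -/
/-!
The multiples of 3 in `ZMod 9` are its 3-torsion `{0, 3, 6}`, so a bijective square has exactly
three cells holding a multiple of 3. Adding the middle column and both diagonals and subtracting
the top and bottom rows gives `3 e = 0` for the centre `e`, so the centre is one of them. Opposite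
cells `c, c'` satisfy `f c + e + f c' = 0`, hence both or neither hold a multiple of 3, and the
other two multiples of 3 form an opposite pair. If that pair were the middle row, the top row would
consist of three distinct non-multiples of 3 summing to `0`; these are congruent mod 3, so they
form `{1, 4, 7}` or `{2, 5, 8}`, with sums `3` and `6`. The same argument excludes the middle
column, so the pair lies on exactly one diagonal.
-/

open Finset

namespace MagicSquare

structure IsMagic {R : Type*} [AddCommMonoid R] (f : Fin 3 × Fin 3 → R) : Prop where
  row : ∀ i, ∑ j, f (i, j) = 0
  col : ∀ j, ∑ i, f (i, j) = 0
  diag : ∑ i, f (i, i) = 0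
  antidiag : ∑ i, f (i, 2 - i) = 0

def opposite (c : Fin 3 × Fin 3) : Fin 3 × Fin 3 := (2 - c.1, 2 - c.2)

namespace IsMagic

variable {R : Type*}

section AddCommMonoid

variable [AddCommMonoid R] {f : Fin 3 × Fin 3 → R}

theorem row_eq (h : IsMagic f) (i : Fin 3) : f (i, 0) + f (i, 1) + f (i, 2) = 0 := by
  simpa [Fin.sum_univ_three] using h.row i

theorem col_eq (h : IsMagic f) (j : Fin 3) : f (0, j) + f (1, j) + f (2, j) = 0 := by
  simpa [Fin.sum_univ_three] using h.col j

theorem diag_eq (h : IsMagic f) : f (0, 0) + f (1, 1) + f (2, 2) = 0 := by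
  simpa [Fin.sum_univ_three] using h.diag

theorem antidiag_eq (h : IsMagic f) : f (0, 2) + f (1, 1) + f (2, 0) = 0 := by
  simpa [Fin.sum_univ_three] using h.antidiag

end AddCommMonoid

variable [CommRing R] {f : Fin 3 × Fin 3 → R}

theorem three_mul_center (h : IsMagic f) : 3 * f (1, 1) = 0 := by
  linear_combination h.col_eq 1 + h.diag_eq + h.antidiag_eq - h.row_eq 0 - h.row_eq 2

theorem add_center_add_opposite (h : IsMagic f) (c : Fin 3 × Fin 3) :
    f c + f (1, 1) + f (opposite c) = 0 := by
  have := h.row_eq 1; have := h.col_eq 1; have := h.diag_eq; have := h.antidiag_eq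
  have := h.three_mul_center
  fin_cases c <;> simp only [opposite] <;> grind

end IsMagic

theorem three_mul_eq_zero_iff_mem (x : ZMod 9) :
    3 * x = 0 ↔ x ∈ ({0, 3, 6} : Finset (ZMod 9)) := by
  revert x; decide

theorem add_add_ne_zero_of_three_mul_ne_zero {x y z : ZMod 9} (hxy : x ≠ y) (hxz : x ≠ z)
    (hyz : y ≠ z) (hx : 3 * x ≠ 0) (hy : 3 * y ≠ 0) (hz : 3 * z ≠ 0) : x + y + z ≠ 0 := by
  revert x y z; decide

theorem insert_eq_zero_three_six_iff {x y z : ZMod 9} (hxy : x ≠ y) (hxz : x ≠ z) (hyz : y ≠ z) :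
    ({x, y, z} : Finset (ZMod 9)) = {0, 3, 6} ↔ 3 * x = 0 ∧ 3 * y = 0 ∧ 3 * z = 0 := by
  simp only [three_mul_eq_zero_iff_mem]
  constructor
  · intro h
    simp [← h]
  · rintro ⟨hx, hy, hz⟩
    refine eq_of_subset_of_card_le (by simp [insert_subset_iff, *]) ?_
    rw [card_eq_three.mpr ⟨x, y, z, hxy, hxz, hyz, rfl⟩]
    rfl

section ThreeTorsion

variable {f : Fin 3 × Fin 3 → ZMod 9}

def threeTorsionCells (f : Fin 3 × Fin 3 → ZMod 9) : Finset (Fin 3 × Fin 3) :=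
  univ.filter fun c => 3 * f c = 0

theorem mem_threeTorsionCells {c : Fin 3 × Fin 3} :
    c ∈ threeTorsionCells f ↔ 3 * f c = 0 := by
  simp [threeTorsionCells]

theorem card_threeTorsionCells (hf : Function.Bijective f) : #(threeTorsionCells f) = 3 := by
  have := Fintype.card_congr ((Equiv.ofBijective f hf).subtypeEquiv
    (p := fun c => 3 * f c = 0) (q := fun x => 3 * x = 0) fun _ => Iff.rfl)
  rw [Fintype.card_subtype, Fintype.card_subtype] at this
  exact this.trans (by decide)

theorem threeTorsionCells_eq (hf : Function.Bijective f) {c₁ c₂ c₃ : Fin 3 × Fin 3}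
    (h₁₂ : c₁ ≠ c₂) (h₁₃ : c₁ ≠ c₃) (h₂₃ : c₂ ≠ c₃) (hc₁ : c₁ ∈ threeTorsionCells f)
    (hc₂ : c₂ ∈ threeTorsionCells f) (hc₃ : c₃ ∈ threeTorsionCells f) :
    threeTorsionCells f = {c₁, c₂, c₃} := by
  refine (eq_of_subset_of_card_le (by simp [insert_subset_iff, *]) ?_).symm
  rw [card_threeTorsionCells hf, card_eq_three.mpr ⟨c₁, c₂, c₃, h₁₂, h₁₃, h₂₃, rfl⟩]

theorem add_add_ne_zero_of_notMem (hf : Function.Injective f) {c₁ c₂ c₃ : Fin 3 × Fin 3}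
    (h₁₂ : c₁ ≠ c₂) (h₁₃ : c₁ ≠ c₃) (h₂₃ : c₂ ≠ c₃) (hc₁ : c₁ ∉ threeTorsionCells f)
    (hc₂ : c₂ ∉ threeTorsionCells f) (hc₃ : c₃ ∉ threeTorsionCells f) :
    f c₁ + f c₂ + f c₃ ≠ 0 := by
  rw [mem_threeTorsionCells] at hc₁ hc₂ hc₃
  exact add_add_ne_zero_of_three_mul_ne_zero (hf.ne h₁₂) (hf.ne h₁₃) (hf.ne h₂₃) hc₁ hc₂ hc₃

theorem insert_image_eq_zero_three_six_iff (hf : Function.Injective f)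
    {c₁ c₂ c₃ : Fin 3 × Fin 3} (h₁₂ : c₁ ≠ c₂) (h₁₃ : c₁ ≠ c₃) (h₂₃ : c₂ ≠ c₃) :
    ({f c₁, f c₂, f c₃} : Finset (ZMod 9)) = {0, 3, 6} ↔
      c₁ ∈ threeTorsionCells f ∧ c₂ ∈ threeTorsionCells f ∧ c₃ ∈ threeTorsionCells f := by
  simp only [mem_threeTorsionCells]
  exact insert_eq_zero_three_six_iff (hf.ne h₁₂) (hf.ne h₁₃) (hf.ne h₂₃)

namespace IsMagic

theorem center_mem_threeTorsionCells (h : IsMagic f) : (1, 1) ∈ threeTorsionCells f :=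
  mem_threeTorsionCells.mpr h.three_mul_center

theorem opposite_mem_threeTorsionCells_iff (h : IsMagic f) (c : Fin 3 × Fin 3) :
    opposite c ∈ threeTorsionCells f ↔ c ∈ threeTorsionCells f := by
  simp only [mem_threeTorsionCells]
  have hc := h.add_center_add_opposite c
  have he := h.three_mul_center
  constructor <;> intro h' <;> linear_combination 3 * hc - he - h'

theorem midLeft_notMem_threeTorsionCells (h : IsMagic f) (hf : Function.Bijective f) :
    (1, 0) ∉ threeTorsionCells f := by
  intro h₁₀
  have h₁₂ : (1, 2) ∈ threeTorsionCells f := (h.opposite_mem_threeTorsionCells_iff (1, 0)).mpr h₁₀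
  have hT := threeTorsionCells_eq hf (by decide) (by decide) (by decide)
    h₁₀ h.center_mem_threeTorsionCells h₁₂
  exact add_add_ne_zero_of_notMem hf.injective (c₁ := (0, 0)) (c₂ := (0, 1)) (c₃ := (0, 2))
    (by decide) (by decide) (by decide) (by rw [hT]; decide) (by rw [hT]; decide)
    (by rw [hT]; decide) (h.row_eq 0)

theorem midTop_notMem_threeTorsionCells (h : IsMagic f) (hf : Function.Bijective f) :
    (0, 1) ∉ threeTorsionCells f := by
  intro h₀₁
  have h₂₁ : (2, 1) ∈ threeTorsionCells f := (h.opposite_mem_threeTorsionCells_iff (0, 1)).mpr h₀₁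
  have hT := threeTorsionCells_eq hf (by decide) (by decide) (by decide)
    h₀₁ h.center_mem_threeTorsionCells h₂₁
  exact add_add_ne_zero_of_notMem hf.injective (c₁ := (0, 0)) (c₂ := (1, 0)) (c₃ := (2, 0))
    (by decide) (by decide) (by decide) (by rw [hT]; decide) (by rw [hT]; decide)
    (by rw [hT]; decide) (h.col_eq 0)

theorem not_topLeft_mem_and_topRight_mem (h : IsMagic f) (hf : Function.Bijective f) :
    ¬((0, 0) ∈ threeTorsionCells f ∧ (0, 2) ∈ threeTorsionCells f) := by
  rintro ⟨h₀₀, h₀₂⟩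
  have h₂₂ : (2, 2) ∈ threeTorsionCells f := (h.opposite_mem_threeTorsionCells_iff (0, 0)).mpr h₀₀
  have hT := threeTorsionCells_eq hf (by decide) (by decide) (by decide) h₀₀ h₀₂ h₂₂
  have h₁₁ := h.center_mem_threeTorsionCells
  rw [hT] at h₁₁
  revert h₁₁; decide

theorem topLeft_mem_or_topRight_mem (h : IsMagic f) (hf : Function.Bijective f) :
    (0, 0) ∈ threeTorsionCells f ∨ (0, 2) ∈ threeTorsionCells f := by
  by_contra! ⟨h₀₀, h₀₂⟩
  have h₁₀ := h.midLeft_notMem_threeTorsionCells hf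
  have h₀₁ := h.midTop_notMem_threeTorsionCells hf
  have hsub : threeTorsionCells f ⊆ {(1, 1)} := by
    intro c hc
    have hopp := (h.opposite_mem_threeTorsionCells_iff c).mpr hc
    fin_cases c <;> simp_all [opposite]
  have := card_le_card hsub
  rw [card_threeTorsionCells hf] at this
  simp at this

end IsMagic

end ThreeTorsion

end MagicSquare

open MagicSquare in
theorem magic_square_mod9_center_and_diagonal (f : Fin 3 × Fin 3 → ZMod 9)
    (hbij : Function.Bijective f)
    (hrow : ∀ i : Fin 3, ∑ j : Fin 3, f (i, j) = 0)
    (hcol : ∀ j : Fin 3, ∑ i : Fin 3, f (i, j) = 0)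
    (hdiag : ∑ i : Fin 3, f (i, i) = 0)
    (hantidiag : ∑ i : Fin 3, f (i, 2 - i) = 0) :
    f (1, 1) ∈ ({0, 3, 6} : Set (ZMod 9)) ∧
    Xor' (({f (0, 0), f (1, 1), f (2, 2)} : Finset (ZMod 9)) = {0, 3, 6})
         (({f (0, 2), f (1, 1), f (2, 0)} : Finset (ZMod 9)) = {0, 3, 6}) := by
  have h : IsMagic f := ⟨hrow, hcol, hdiag, hantidiag⟩
  have hcenter := h.center_mem_threeTorsionCells
  refine ⟨?_, ?_⟩
  · rw [mem_threeTorsionCells, three_mul_eq_zero_iff_mem] at hcenter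
    simpa using hcenter
  · rw [insert_image_eq_zero_three_six_iff hbij.injective (by decide) (by decide) (by decide),
      insert_image_eq_zero_three_six_iff hbij.injective (by decide) (by decide) (by decide),
      show (2, 2) ∈ threeTorsionCells f ↔ _ from h.opposite_mem_threeTorsionCells_iff (0, 0),
      show (2, 0) ∈ threeTorsionCells f ↔ _ from h.opposite_mem_threeTorsionCells_iff (0, 2)]
    simp only [hcenter, true_and, and_self]
    exact (xor_iff_or_and_not_and _ _).mpr
      ⟨h.topLeft_mem_or_topRight_mem hbij, h.not_topLeft_mem_and_topRight_mem hbij⟩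
end

section
/- Let G be a finite group acting on a finite nonempty set X with N orbits. If |X| > N·|G|/2, then there exists x ∈ X whose stabilizer is trivial. -/
/-!
Counting the pairs `(g, x)` with `g • x = x` once by `g` and once by `x` turns Burnside's lemma
into `∑ₓ |G_x| = N·|G|`. If no stabilizer were trivial, every term would be at least `2`, giving
`2|X| ≤ N·|G|`.
-/

namespace MulAction

variable (G X : Type*) [Group G] [MulAction G X]

theorem sum_card_stabilizer_eq_card_orbits_mul_card_group [Finite G] [Fintype X] :
    ∑ x : X, Nat.card (stabilizer G x) = Nat.card (orbitRel.Quotient G X) * Nat.card G := by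
  rw [← Nat.card_sigma, ← Nat.card_prod, ← Nat.card_congr (sigmaFixedByEquivOrbitsProdGroup G X)]
  exact Nat.card_congr <|
    (Equiv.subtypeProdEquivSigmaSubtype fun (x : X) (g : G) => g • x = x).symm.trans <|
      ((Equiv.prodComm X G).subtypeEquiv fun _ => Iff.rfl).trans
        (Equiv.subtypeProdEquivSigmaSubtype fun (g : G) (x : X) => g • x = x)

theorem two_mul_card_le_card_orbits_mul_card_group [Finite G] [Finite X]
    (hstab : ∀ x : X, stabilizer G x ≠ ⊥) :
    2 * Nat.card X ≤ Nat.card (orbitRel.Quotient G X) * Nat.card G := by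
  have := Fintype.ofFinite X
  calc 2 * Nat.card X = ∑ _x : X, 2 := by simp [Nat.card_eq_fintype_card, mul_comm]
    _ ≤ ∑ x : X, Nat.card (stabilizer G x) :=
      Finset.sum_le_sum fun x _ => (Subgroup.one_lt_card_iff_ne_bot _).mpr (hstab x)
    _ = _ := sum_card_stabilizer_eq_card_orbits_mul_card_group G X

end MulAction

theorem exists_trivial_stabilizer_of_large_set_general (G X : Type*) [Group G] [Finite G]
    [MulAction G X] [Finite X]
    (h : (Nat.card X : ℚ) >
      (Nat.card (Quotient (MulAction.orbitRel G X)) : ℚ) * (Nat.card G : ℚ) / 2) :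
    ∃ x : X, MulAction.stabilizer G x = ⊥ := by
  by_contra! hstab
  have hle : ((2 * Nat.card X : ℕ) : ℚ) ≤ _ :=
    Nat.cast_le.mpr (MulAction.two_mul_card_le_card_orbits_mul_card_group G X hstab)
  push_cast at hle
  linarith

theorem exists_trivial_stabilizer_of_large_set (G X : Type*) [Group G] [Finite G]
    [MulAction G X] [Finite X] [Nonempty X]
    (h : (Nat.card X : ℚ) >
      (Nat.card (Quotient (MulAction.orbitRel G X)) : ℚ) * (Nat.card G : ℚ) / 2) :
    ∃ x : X, MulAction.stabilizer G x = ⊥ :=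
  exists_trivial_stabilizer_of_large_set_general G X h
end
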